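/- arXiv:1810.00411 — 6 statements merged into one kernel-verified Lean document; each statement's English description precedes it below -/
import Mathlib

section
/- Let Y, X* be random variables on a finite probability space, Δ a binary indicator with φ(y,x) := P(Δ=1 | Y=y, X*=x) > 0, and ω(y,x) := P(Δ=1 | X*=x)/φ(y,x). Then for every x with P(X*=x, Δ=1)>0, E[Y | X*=x] = E[Y · ω(Y, x) | Δ=1, X*=x]. -/
open scoped BigOperators
attribute [local instance] Classical.propDecidable

/-- Probability of an event under weight function `p` on a finite space. -/
noncomputable def Pr {Ω : Type*} [Fintype Ω] (p : Ω → ℝ) (A : Set Ω) : ℝ :=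
  ∑ ω, if ω ∈ A then p ω else 0

/-- Conditional probability of `A` given `B`. -/
noncomputable def condPr {Ω : Type*} [Fintype Ω] (p : Ω → ℝ) (A B : Set Ω) : ℝ :=
  Pr p (A ∩ B) / Pr p B

/-- Conditional expectation of `f` given event `B`. -/
noncomputable def condE {Ω : Type*} [Fintype Ω] (p : Ω → ℝ) (f : Ω → ℝ) (B : Set Ω) : ℝ :=
  (∑ ω, if ω ∈ B then p ω * f ω else 0) / Pr p B

/-- Expectation of `f`. -/
noncomputable def Ex {Ω : Type*} [Fintype Ω] (p : Ω → ℝ) (f : Ω → ℝ) : ℝ :=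
  ∑ ω, p ω * f ω

/-!
Fibre by fibre in `Y`, the weight `ω(y, x) = P(Δ = 1 | X* = x) / P(Δ = 1 | Y = y, X* = x)` turns the
selected mass `P(Δ = 1, Y = y, X* = x)` back into `P(Δ = 1 | X* = x) · P(Y = y, X* = x)`. Summing
`y` times these masses over the fibres and dividing by `P(Δ = 1, X* = x)` gives `E[Y | X* = x]`.
-/

/- When `a = 0` both sides vanish through the junk value `c / 0 = 0`. -/
theorem div_div_mul_eq_mul_of_ne_zero {K : Type*} [DivisionRing K] {a b : K} (c : K)
    (hb : a ≠ 0 → b ≠ 0) : c / (b / a) * b = c * a := by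
  by_cases ha : a = 0
  · simp [ha]
  · rw [div_div_eq_mul_div, div_mul_cancel₀ _ (hb ha)]

section FiniteSums

variable {Ω α : Type*} [Fintype Ω] (p : Ω → ℝ)

theorem Pr_nonneg (hp : ∀ ω, 0 ≤ p ω) (A : Set Ω) : 0 ≤ Pr p A :=
  Finset.sum_nonneg fun ω _ => by split_ifs <;> simp [hp ω]

theorem div_condPr_mul_Pr_inter_eq (hp : ∀ ω, 0 ≤ p ω) {S A : Set Ω} (c : ℝ)
    (hpos : 0 < Pr p A → 0 < condPr p S A) :
    c / condPr p S A * Pr p (S ∩ A) = c * Pr p A :=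
  div_div_mul_eq_mul_of_ne_zero c fun hA =>
    (div_ne_zero_iff.mp (hpos ((Pr_nonneg p hp A).lt_of_ne' hA)).ne').1

theorem sum_ite_mem_mul_comp_eq_sum_Pr_fiber (Y : Ω → α) (g : α → ℝ) (B : Set Ω) :
    (∑ ω, if ω ∈ B then p ω * g (Y ω) else 0)
      = ∑ y ∈ Finset.univ.image Y, Pr p ({ω | Y ω = y} ∩ B) * g y := by
  rw [← Finset.sum_fiberwise_of_maps_to fun ω _ => Finset.mem_image_of_mem Y (Finset.mem_univ ω)]
  refine Finset.sum_congr rfl fun y _ => ?_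
  rw [Pr, Finset.sum_mul, Finset.sum_filter]
  refine Finset.sum_congr rfl fun ω _ => ?_
  by_cases hy : Y ω = y <;> by_cases hB : ω ∈ B <;> simp [hy, hB]

theorem sum_ite_mem_mul_weight_eq (Y : Ω → α) (g w : α → ℝ) {E F : Set Ω} {c : ℝ}
    (hw : ∀ y, w y * Pr p ({ω | Y ω = y} ∩ F) = c * Pr p ({ω | Y ω = y} ∩ E)) :
    (∑ ω, if ω ∈ F then p ω * (g (Y ω) * w (Y ω)) else 0)
      = c * ∑ ω, if ω ∈ E then p ω * g (Y ω) else 0 := by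
  rw [sum_ite_mem_mul_comp_eq_sum_Pr_fiber p Y (fun y => g y * w y),
    sum_ite_mem_mul_comp_eq_sum_Pr_fiber p Y g, Finset.mul_sum]
  refine Finset.sum_congr rfl fun y _ => ?_
  linear_combination g y * hw y

end FiniteSums

theorem stmt2_general {Ω β : Type*} [Fintype Ω]
    (p : Ω → ℝ) (hp : ∀ ω, 0 ≤ p ω)
    (Y : Ω → ℝ) (X : Ω → β) (D : Ω → Bool)
    (φ : ℝ → β → ℝ)
    (hφdef : ∀ y x, φ y x =
      condPr p {ω' | D ω' = true} {ω' | Y ω' = y ∧ X ω' = x})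
    (hφpos : ∀ y x, 0 < Pr p {ω' | Y ω' = y ∧ X ω' = x} → 0 < φ y x)
    (w : ℝ → β → ℝ)
    (hwdef : ∀ y x, w y x = condPr p {ω' | D ω' = true} {ω' | X ω' = x} / φ y x) :
    ∀ x, 0 < Pr p {ω' | X ω' = x ∧ D ω' = true} →
      condE p Y {ω' | X ω' = x}
        = condE p (fun ω' => Y ω' * w (Y ω') x) {ω' | D ω' = true ∧ X ω' = x} := by
  intro x hx
  set E := {ω' | X ω' = x}
  set S := {ω' | D ω' = true}
  set SE := {ω' | D ω' = true ∧ X ω' = x}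
  have hweight : ∀ y, w y x * Pr p ({ω | Y ω = y} ∩ SE)
      = condPr p S E * Pr p ({ω | Y ω = y} ∩ E) := by
    intro y
    rw [hwdef, hφdef, show {ω | Y ω = y} ∩ SE = S ∩ {ω' | Y ω' = y ∧ X ω' = x} from
      Set.inter_left_comm _ _ _]
    exact div_condPr_mul_Pr_inter_eq p hp _ fun h => hφdef y x ▸ hφpos y x h
  have hSE : Pr p SE ≠ 0 := by
    rw [show SE = S ∩ E from rfl, Set.inter_comm]
    exact hx.ne'
  have hreweight := sum_ite_mem_mul_weight_eq p Y (fun y => y) (w · x) hweight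
  rw [condE, condE, hreweight, condPr, show S ∩ E = SE from rfl]
  field_simp

/-- FPW representation of the regression function:
`E[Y | X*=x] = E[Y · ω(Y,x) | Δ=1, X*=x]`. -/
theorem stmt2 {Ω β : Type*} [Fintype Ω]
    (p : Ω → ℝ) (hp : ∀ ω, 0 ≤ p ω) (hsum : ∑ ω, p ω = 1)
    (Y : Ω → ℝ) (X : Ω → β) (D : Ω → Bool)
    (φ : ℝ → β → ℝ)
    (hφdef : ∀ y x, φ y x =
      condPr p {ω' | D ω' = true} {ω' | Y ω' = y ∧ X ω' = x})
    (hφpos : ∀ y x, 0 < Pr p {ω' | Y ω' = y ∧ X ω' = x} → 0 < φ y x)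
    (w : ℝ → β → ℝ)
    (hwdef : ∀ y x, w y x = condPr p {ω' | D ω' = true} {ω' | X ω' = x} / φ y x) :
    ∀ x, 0 < Pr p {ω' | X ω' = x ∧ D ω' = true} →
      condE p Y {ω' | X ω' = x}
        = condE p (fun ω' => Y ω' * w (Y ω') x) {ω' | D ω' = true ∧ X ω' = x} :=
  stmt2_general p hp Y X D φ hφdef hφpos w hwdef
end

section
/- Let Y*, X be random variables on a finite probability space and D^Y a binary indicator with P(D^Y=1 | Y*, X) = P(D^Y=1 | Y*) and P(D^Y=1 | Y*=y) > 0 for all y. Define Y := Y*·D^Y and ψ(y) := 1/P(D^Y=1 | Y*=y). Then E[Y* | X=x] = E[ Y·ψ(Y*) | X=x ] for all x with P(X=x)>0; equivalently, E[Y* | X] = E[ D^Y · Y* / P(D^Y=1|Y*) | X ] almost surely. -/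
open scoped BigOperators
attribute [local instance] Classical.propDecidable

/-- IPW identity for selectively missing outcomes:
`E[Y* | X=x] = E[ D^Y·Y* / P(D^Y=1|Y*) | X=x ]`. -/
theorem stmt7 {Ω α : Type*} [Fintype Ω]
    (p : Ω → ℝ) (hp : ∀ ω, 0 ≤ p ω) (hsum : ∑ ω, p ω = 1)
    (Ystar : Ω → ℝ) (X : Ω → α) (DY : Ω → Bool)
    (hexcl : ∀ ω, 0 < p ω →
      condPr p {ω' | DY ω' = true} {ω' | Ystar ω' = Ystar ω ∧ X ω' = X ω}
        = condPr p {ω' | DY ω' = true} {ω' | Ystar ω' = Ystar ω})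
    (hpos : ∀ ω, 0 < p ω →
      0 < condPr p {ω' | DY ω' = true} {ω' | Ystar ω' = Ystar ω}) :
    ∀ x, 0 < Pr p {ω' | X ω' = x} →
      condE p Ystar {ω' | X ω' = x}
        = condE p (fun ω' => (if DY ω' then Ystar ω' else 0)
            / condPr p {a | DY a = true} {a | Ystar a = Ystar ω'})
          {ω' | X ω' = x} := by
  classical
  intro x hx
  unfold condE
  congr 1
  -- rewrite both numerators as sums over the filter {X = x}
  have hconv : ∀ f : Ω → ℝ, (∑ ω, if ω ∈ {ω' | X ω' = x} then p ω * f ω else 0)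
      = ∑ ω ∈ Finset.univ.filter (fun ω => X ω = x), p ω * f ω := by
    intro f
    rw [Finset.sum_filter]
    rfl
  rw [hconv, hconv]
  set S := Finset.univ.filter (fun ω => X ω = x) with hS
  -- fiberwise over values of Ystar
  rw [← Finset.sum_fiberwise_of_maps_to (t := S.image Ystar)
      (g := Ystar) (fun i hi => Finset.mem_image_of_mem _ hi) (fun ω => p ω * Ystar ω),
    ← Finset.sum_fiberwise_of_maps_to (t := S.image Ystar)
      (g := Ystar) (fun i hi => Finset.mem_image_of_mem _ hi)]
  refine Finset.sum_congr rfl ?_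
  intro y hy
  set F := S.filter (fun ω => Ystar ω = y) with hF
  have hFmem : ∀ ω ∈ F, Ystar ω = y ∧ X ω = x := by
    intro ω hω
    simp only [hF, hS, Finset.mem_filter, Finset.mem_univ, true_and] at hω
    exact ⟨hω.2, hω.1⟩
  by_cases hzero : ∀ ω ∈ F, p ω = 0
  · rw [Finset.sum_eq_zero (fun ω hω => by rw [hzero ω hω]; ring),
      Finset.sum_eq_zero (fun ω hω => by rw [hzero ω hω]; ring)]
  · push_neg at hzero
    obtain ⟨ω₀, hω₀F, hω₀p⟩ := hzero
    have hpω₀ : 0 < p ω₀ := lt_of_le_of_ne (hp ω₀) (Ne.symm hω₀p)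
    obtain ⟨hY₀, hX₀⟩ := hFmem ω₀ hω₀F
    set π : ℝ := condPr p {a | DY a = true} {a | Ystar a = y} with hπ
    have hπpos : 0 < π := by
      have := hpos ω₀ hpω₀
      rwa [hY₀] at this
    -- identify Pr over B with sum over F
    have hB : Pr p {ω' | Ystar ω' = y ∧ X ω' = x} = ∑ ω ∈ F, p ω := by
      rw [Pr, hF, hS, Finset.filter_filter, Finset.sum_filter]
      refine Finset.sum_congr rfl (fun ω _ => ?_)
      by_cases h1 : Ystar ω = y <;> by_cases h2 : X ω = x <;>
        simp [h1, h2, and_comm]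
    have hDB : Pr p ({a | DY a = true} ∩ {ω' | Ystar ω' = y ∧ X ω' = x})
        = ∑ ω ∈ F, if DY ω then p ω else 0 := by
      rw [Pr, hF, hS, Finset.filter_filter, Finset.sum_filter]
      refine Finset.sum_congr rfl (fun ω _ => ?_)
      by_cases h1 : Ystar ω = y <;> by_cases h2 : X ω = x <;> by_cases h3 : DY ω <;>
        simp [h1, h2, h3, and_comm, Set.mem_inter_iff]
    have hBpos : 0 < Pr p {ω' | Ystar ω' = y ∧ X ω' = x} := by
      rw [hB]
      exact lt_of_lt_of_le hpω₀ (Finset.single_le_sum (fun ω _ => hp ω) hω₀F)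
    have hkey : (∑ ω ∈ F, if DY ω then p ω else 0) = π * ∑ ω ∈ F, p ω := by
      have h := hexcl ω₀ hpω₀
      rw [hY₀, hX₀] at h
      rw [condPr] at h
      rw [← hB, ← hDB]
      rw [div_eq_iff (ne_of_gt hBpos)] at h
      rw [h, hπ]
    -- now compute both fiber sums
    have hLHS : (∑ ω ∈ F, p ω * Ystar ω) = y * ∑ ω ∈ F, p ω := by
      rw [Finset.mul_sum]
      refine Finset.sum_congr rfl (fun ω hω => ?_)
      rw [(hFmem ω hω).1]; ring
    have hRHS : (∑ ω ∈ F, p ω * ((if DY ω then Ystar ω else 0)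
        / condPr p {a | DY a = true} {a | Ystar a = Ystar ω}))
        = (y / π) * ∑ ω ∈ F, if DY ω then p ω else 0 := by
      rw [Finset.mul_sum]
      refine Finset.sum_congr rfl (fun ω hω => ?_)
      rw [(hFmem ω hω).1, ← hπ]
      by_cases h3 : DY ω <;> simp [h3] <;> ring
    rw [hLHS, hRHS, hkey]
    field_simp
end

section
/- Let Y, X* be random variables on a finite probability space, Δ binary with φ(y,x):=P(Δ=1|Y=y,X*=x)>0, ω(y,x):=P(Δ=1|X*=x)/φ(y,x), and g(x):=E[Y|X*=x]. Define U := Y − g(X*). Then for every function h on the range of X*, E[ U · Δ · ω(Y, X*) · h(X*) ] = 0. -/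
open scoped BigOperators
attribute [local instance] Classical.propDecidable

/-- orthogonality of the FPW-weighted regression residual:
`E[U·Δ·ω(Y,X*)·h(X*)] = 0` for every function `h` of the covariates. -/
theorem stmt10 {Ω β : Type*} [Fintype Ω]
    (p : Ω → ℝ) (hp : ∀ ω, 0 ≤ p ω) (hsum : ∑ ω, p ω = 1)
    (Y : Ω → ℝ) (X : Ω → β) (D : Ω → Bool)
    (φ : ℝ → β → ℝ)
    (hφdef : ∀ y x, φ y x =
      condPr p {ω' | D ω' = true} {ω' | Y ω' = y ∧ X ω' = x})
    (hφpos : ∀ ω, 0 < p ω → 0 < φ (Y ω) (X ω))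
    (w : ℝ → β → ℝ)
    (hwdef : ∀ y x, w y x = condPr p {ω' | D ω' = true} {ω' | X ω' = x} / φ y x)
    (g : β → ℝ) (hgdef : ∀ x, g x = condE p Y {ω' | X ω' = x}) :
    ∀ h : β → ℝ,
      Ex p (fun ω => (Y ω - g (X ω)) * (if D ω then (1:ℝ) else 0)
        * w (Y ω) (X ω) * h (X ω)) = 0 := by
  intro h
  classical
  set A : β → ℝ := fun x => condPr p {ω' | D ω' = true} {ω' | X ω' = x} * h x with hA
  -- In every fiber of X, the residual has zero weighted sum.
  have key : ∀ x : β,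
      (∑ ω ∈ Finset.univ.filter (fun ω => X ω = x), p ω * (Y ω - g x)) = 0 := by
    intro x
    have hPr : Pr p {ω' | X ω' = x}
        = ∑ ω ∈ Finset.univ.filter (fun ω => X ω = x), p ω := by
      rw [Pr, Finset.sum_filter]
      exact Finset.sum_congr rfl fun ω _ => by simp [Set.mem_setOf_eq]
    by_cases hS : Pr p {ω' | X ω' = x} = 0
    · apply Finset.sum_eq_zero
      intro ω hω
      have hz : p ω = 0 :=
        (Finset.sum_eq_zero_iff_of_nonneg (fun ω' _ => hp ω')).mp
          (by rw [← hPr]; exact hS) ω hω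
      simp [hz]
    · have hg := hgdef x
      rw [condE] at hg
      have hnum : (∑ ω, if ω ∈ {ω' | X ω' = x} then p ω * Y ω else 0)
          = ∑ ω ∈ Finset.univ.filter (fun ω => X ω = x), p ω * Y ω := by
        rw [Finset.sum_filter]
        exact Finset.sum_congr rfl fun ω _ => by simp [Set.mem_setOf_eq]
      have hgmul : g x * Pr p {ω' | X ω' = x}
          = ∑ ω ∈ Finset.univ.filter (fun ω => X ω = x), p ω * Y ω := by
        rw [hg, ← hnum, div_mul_cancel₀ _ hS]
      calc (∑ ω ∈ Finset.univ.filter (fun ω => X ω = x), p ω * (Y ω - g x))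
          = (∑ ω ∈ Finset.univ.filter (fun ω => X ω = x), p ω * Y ω)
            - (∑ ω ∈ Finset.univ.filter (fun ω => X ω = x), p ω) * g x := by
            rw [Finset.sum_mul, ← Finset.sum_sub_distrib]
            exact Finset.sum_congr rfl fun ω _ => by ring
        _ = 0 := by rw [← hPr, ← hgmul]; ring
  -- Step 1: collapse the selection indicator and weight fiberwise in (Y, X).
  have step1 : Ex p (fun ω => (Y ω - g (X ω)) * (if D ω then (1:ℝ) else 0)
        * w (Y ω) (X ω) * h (X ω)) = ∑ ω, p ω * (Y ω - g (X ω)) * A (X ω) := by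
    rw [Ex,
      ← Finset.sum_fiberwise_of_maps_to
        (g := fun ω => (Y ω, X ω)) (t := Finset.univ.image fun ω => (Y ω, X ω))
        (fun ω _ => Finset.mem_image_of_mem _ (Finset.mem_univ ω))
        (f := fun ω => p ω * ((Y ω - g (X ω)) * (if D ω then (1:ℝ) else 0)
          * w (Y ω) (X ω) * h (X ω))),
      ← Finset.sum_fiberwise_of_maps_to
        (g := fun ω => (Y ω, X ω)) (t := Finset.univ.image fun ω => (Y ω, X ω))
        (fun ω _ => Finset.mem_image_of_mem _ (Finset.mem_univ ω))
        (f := fun ω => p ω * (Y ω - g (X ω)) * A (X ω))]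
    apply Finset.sum_congr rfl
    intro c _
    set s := Finset.univ.filter (fun ω => (Y ω, X ω) = c) with hs
    have hmem : ∀ ω ∈ s, Y ω = c.1 ∧ X ω = c.2 := by
      intro ω hω
      have h2 := (Finset.mem_filter.mp hω).2
      exact ⟨congrArg Prod.fst h2, congrArg Prod.snd h2⟩
    have hsetPr : Pr p {ω' | Y ω' = c.1 ∧ X ω' = c.2} = ∑ ω ∈ s, p ω := by
      rw [Pr, hs, Finset.sum_filter]
      exact Finset.sum_congr rfl fun ω _ => by
        simp [Set.mem_setOf_eq, Prod.ext_iff]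
    have hsetPD : Pr p ({ω' | D ω' = true} ∩ {ω' | Y ω' = c.1 ∧ X ω' = c.2})
        = ∑ ω ∈ s, (if D ω then p ω else 0) := by
      rw [Pr, hs, Finset.sum_filter]
      apply Finset.sum_congr rfl
      intro ω _
      by_cases hd : D ω = true <;>
        by_cases hc : Y ω = c.1 ∧ X ω = c.2 <;>
          simp [Set.mem_setOf_eq, Prod.ext_iff, hd, hc]
    have hL : (∑ ω ∈ s, p ω * ((Y ω - g (X ω)) * (if D ω then (1:ℝ) else 0)
          * w (Y ω) (X ω) * h (X ω)))
        = ((c.1 - g c.2) * w c.1 c.2 * h c.2) * ∑ ω ∈ s, (if D ω then p ω else 0) := by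
      rw [Finset.mul_sum]
      apply Finset.sum_congr rfl
      intro ω hω
      obtain ⟨hy, hx⟩ := hmem ω hω
      by_cases hd : D ω = true <;> simp [hy, hx, hd] <;> ring
    have hR : (∑ ω ∈ s, p ω * (Y ω - g (X ω)) * A (X ω))
        = ((c.1 - g c.2) * A c.2) * ∑ ω ∈ s, p ω := by
      rw [Finset.mul_sum]
      apply Finset.sum_congr rfl
      intro ω hω
      obtain ⟨hy, hx⟩ := hmem ω hω
      rw [hy, hx]; ring
    rw [hL, hR]
    by_cases hS : (∑ ω ∈ s, p ω) = 0
    · have hPD : (∑ ω ∈ s, (if D ω then p ω else 0)) = 0 := by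
        apply Finset.sum_eq_zero
        intro ω hω
        have hz : p ω = 0 :=
          (Finset.sum_eq_zero_iff_of_nonneg (fun ω' _ => hp ω')).mp hS ω hω
        simp [hz]
      rw [hS, hPD, mul_zero, mul_zero]
    · obtain ⟨ω₁, hω₁, hpω₁⟩ := Finset.exists_ne_zero_of_sum_ne_zero hS
      obtain ⟨hy₁, hx₁⟩ := hmem ω₁ hω₁
      have hφp : 0 < φ c.1 c.2 := by
        rw [← hy₁, ← hx₁]
        exact hφpos ω₁ (lt_of_le_of_ne (hp ω₁) (Ne.symm hpω₁))
      have hφeq : φ c.1 c.2 = (∑ ω ∈ s, (if D ω then p ω else 0)) / ∑ ω ∈ s, p ω := by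
        rw [hφdef, condPr, hsetPD, hsetPr]
      have hPD : (∑ ω ∈ s, (if D ω then p ω else 0)) = φ c.1 c.2 * ∑ ω ∈ s, p ω := by
        rw [hφeq, div_mul_cancel₀ _ hS]
      rw [hPD, hwdef, hA]
      field_simp
  rw [step1,
    ← Finset.sum_fiberwise_of_maps_to
      (g := X) (t := Finset.univ.image X)
      (fun ω _ => Finset.mem_image_of_mem _ (Finset.mem_univ ω))
      (f := fun ω => p ω * (Y ω - g (X ω)) * A (X ω))]
  apply Finset.sum_eq_zero
  intro x _
  have hx : (∑ ω ∈ Finset.univ.filter (fun ω => X ω = x), p ω * (Y ω - g (X ω)) * A (X ω))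
      = (∑ ω ∈ Finset.univ.filter (fun ω => X ω = x), p ω * (Y ω - g x)) * A x := by
    rw [Finset.sum_mul]
    apply Finset.sum_congr rfl
    intro ω hω
    rw [(Finset.mem_filter.mp hω).2]
  rw [hx, key x, zero_mul]
end

section
/- Let Y, X* be random variables on a finite probability space, Δ binary with φ(y,x) := P(Δ=1|Y=y,X*=x) > 0 and ω(y,x) := P(Δ=1|X*=x)/φ(y,x). Then for any functions p, q on the range of X*, E[ Δ · p(X*) · q(X*) ] = E[ Δ · p(X*) · ω(Y, X*) · q(X*) ]. -/
open scoped BigOperators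
attribute [local instance] Classical.propDecidable

section Aux
variable {Ω : Type*} [Fintype Ω]

lemma sum_congr_fiber {γ : Type*} (k : Ω → γ) (F G : Ω → ℝ)
    (h : ∀ b, ∑ ω ∈ Finset.univ.filter (fun ω => k ω = b), F ω
            = ∑ ω ∈ Finset.univ.filter (fun ω => k ω = b), G ω) :
    ∑ ω, F ω = ∑ ω, G ω := by
  classical
  rw [← Finset.sum_fiberwise_of_maps_to (g := k) (t := Finset.univ.image k)
      (fun x _ => Finset.mem_image_of_mem k (Finset.mem_univ x)) F,
      ← Finset.sum_fiberwise_of_maps_to (g := k) (t := Finset.univ.image k)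
      (fun x _ => Finset.mem_image_of_mem k (Finset.mem_univ x)) G]
  exact Finset.sum_congr rfl fun b _ => h b

lemma Pr_filter (p : Ω → ℝ) (C : Ω → Prop) [DecidablePred C] :
    Pr p {ω' | C ω'} = ∑ ω ∈ Finset.univ.filter C, p ω := by
  rw [Pr, Finset.sum_filter]
  exact Finset.sum_congr rfl fun ω _ => by by_cases h : C ω <;> simp [Set.mem_setOf_eq, h]

lemma Pr_inter_filter (p : Ω → ℝ) (D : Ω → Bool) (C : Ω → Prop) [DecidablePred C] :
    Pr p ({ω' | D ω' = true} ∩ {ω' | C ω'})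
      = ∑ ω ∈ Finset.univ.filter C, p ω * (if D ω then (1:ℝ) else 0) := by
  rw [Pr, Finset.sum_filter]
  refine Finset.sum_congr rfl fun ω _ => ?_
  by_cases hC : C ω <;> by_cases hD : D ω = true <;>
    simp [hC, hD, Set.mem_inter_iff, Set.mem_setOf_eq]

end Aux

/-- normalization identity for the FPW series estimator:
`E[Δ·p(X*)·q(X*)] = E[Δ·p(X*)·ω(Y,X*)·q(X*)]`. -/


theorem stmt11 {Ω β : Type*} [Fintype Ω]
    (p : Ω → ℝ) (hp : ∀ ω, 0 ≤ p ω) (hsum : ∑ ω, p ω = 1)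
    (Y : Ω → ℝ) (X : Ω → β) (D : Ω → Bool)
    (φ : ℝ → β → ℝ)
    (hφdef : ∀ y x, φ y x =
      condPr p {ω' | D ω' = true} {ω' | Y ω' = y ∧ X ω' = x})
    (hφpos : ∀ ω, 0 < p ω → 0 < φ (Y ω) (X ω))
    (w : ℝ → β → ℝ)
    (hwdef : ∀ y x, w y x = condPr p {ω' | D ω' = true} {ω' | X ω' = x} / φ y x) :
    ∀ pf qf : β → ℝ,
      Ex p (fun ω => (if D ω then (1:ℝ) else 0) * pf (X ω) * qf (X ω))
        = Ex p (fun ω => (if D ω then (1:ℝ) else 0) * pf (X ω)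
            * w (Y ω) (X ω) * qf (X ω)) := by
  intro pf qf
  classical
  set r : β → ℝ := fun x => condPr p {ω' | D ω' = true} {ω' | X ω' = x} with hr
  -- Key fact for fibers of X
  have keyX : ∀ x : β,
      ∑ ω ∈ Finset.univ.filter (fun ω => X ω = x), p ω * (if D ω then (1:ℝ) else 0)
        = r x * ∑ ω ∈ Finset.univ.filter (fun ω => X ω = x), p ω := by
    intro x
    have hS : Pr p {ω' | X ω' = x} = ∑ ω ∈ Finset.univ.filter (fun ω => X ω = x), p ω :=
      Pr_filter p _
    have hSd : Pr p ({ω' | D ω' = true} ∩ {ω' | X ω' = x})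
        = ∑ ω ∈ Finset.univ.filter (fun ω => X ω = x), p ω * (if D ω then (1:ℝ) else 0) :=
      Pr_inter_filter p D _
    by_cases h0 : (∑ ω ∈ Finset.univ.filter (fun ω => X ω = x), p ω) = 0
    · have hz : ∀ ω ∈ Finset.univ.filter (fun ω => X ω = x), p ω = 0 :=
        (Finset.sum_eq_zero_iff_of_nonneg (fun ω _ => hp ω)).1 h0
      rw [h0, mul_zero]
      exact Finset.sum_eq_zero fun ω hω => by rw [hz ω hω, zero_mul]
    · rw [hr]
      simp only [condPr, hS, hSd]
      field_simp
  -- Key fact for fibers of (Y, X)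
  have keyYX : ∀ y : ℝ, ∀ x : β,
      w y x * ∑ ω ∈ Finset.univ.filter (fun ω => Y ω = y ∧ X ω = x),
          p ω * (if D ω then (1:ℝ) else 0)
        = r x * ∑ ω ∈ Finset.univ.filter (fun ω => Y ω = y ∧ X ω = x), p ω := by
    intro y x
    have hS : Pr p {ω' | Y ω' = y ∧ X ω' = x}
        = ∑ ω ∈ Finset.univ.filter (fun ω => Y ω = y ∧ X ω = x), p ω := Pr_filter p _
    have hSd : Pr p ({ω' | D ω' = true} ∩ {ω' | Y ω' = y ∧ X ω' = x})
        = ∑ ω ∈ Finset.univ.filter (fun ω => Y ω = y ∧ X ω = x),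
            p ω * (if D ω then (1:ℝ) else 0) := Pr_inter_filter p D _
    by_cases h0 : (∑ ω ∈ Finset.univ.filter (fun ω => Y ω = y ∧ X ω = x), p ω) = 0
    · have hz : ∀ ω ∈ Finset.univ.filter (fun ω => Y ω = y ∧ X ω = x), p ω = 0 :=
        (Finset.sum_eq_zero_iff_of_nonneg (fun ω _ => hp ω)).1 h0
      have hzd : (∑ ω ∈ Finset.univ.filter (fun ω => Y ω = y ∧ X ω = x),
          p ω * (if D ω then (1:ℝ) else 0)) = 0 :=
        Finset.sum_eq_zero fun ω hω => by rw [hz ω hω, zero_mul]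
      rw [h0, hzd, mul_zero, mul_zero]
    · -- the fiber has positive probability, so φ y x > 0
      obtain ⟨ω₀, hω₀mem, hω₀⟩ : ∃ ω₀ ∈ Finset.univ.filter (fun ω => Y ω = y ∧ X ω = x),
          p ω₀ ≠ 0 := by
        by_contra hc
        push_neg at hc
        exact h0 (Finset.sum_eq_zero fun ω hω => hc ω hω)
      have hmem : Y ω₀ = y ∧ X ω₀ = x := (Finset.mem_filter.1 hω₀mem).2
      have hφ : 0 < φ y x := by
        have := hφpos ω₀ (lt_of_le_of_ne (hp ω₀) (Ne.symm hω₀))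
        rwa [hmem.1, hmem.2] at this
      have hφeq : φ y x
          = (∑ ω ∈ Finset.univ.filter (fun ω => Y ω = y ∧ X ω = x),
              p ω * (if D ω then (1:ℝ) else 0))
            / ∑ ω ∈ Finset.univ.filter (fun ω => Y ω = y ∧ X ω = x), p ω := by
        rw [hφdef y x, condPr, hS, hSd]
      have hSd_eq : (∑ ω ∈ Finset.univ.filter (fun ω => Y ω = y ∧ X ω = x),
          p ω * (if D ω then (1:ℝ) else 0))
            = φ y x * ∑ ω ∈ Finset.univ.filter (fun ω => Y ω = y ∧ X ω = x), p ω := by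
        rw [hφeq, div_mul_cancel₀ _ h0]
      have hrx : condPr p {ω' | D ω' = true} {ω' | X ω' = x} = r x := rfl
      rw [hwdef y x, hSd_eq, hrx]
      field_simp
  -- Main computation
  rw [Ex, Ex]
  have lhs_eq : ∑ ω, p ω * ((if D ω then (1:ℝ) else 0) * pf (X ω) * qf (X ω))
      = ∑ ω, p ω * (pf (X ω) * qf (X ω) * r (X ω)) := by
    apply sum_congr_fiber X
    intro x
    have h1 : ∀ ω ∈ Finset.univ.filter (fun ω => X ω = x),
        p ω * ((if D ω then (1:ℝ) else 0) * pf (X ω) * qf (X ω))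
          = (pf x * qf x) * (p ω * (if D ω then (1:ℝ) else 0)) := by
      intro ω hω
      have hx : X ω = x := (Finset.mem_filter.1 hω).2
      rw [hx]; ring
    have h2 : ∀ ω ∈ Finset.univ.filter (fun ω => X ω = x),
        p ω * (pf (X ω) * qf (X ω) * r (X ω)) = (pf x * qf x * r x) * p ω := by
      intro ω hω
      have hx : X ω = x := (Finset.mem_filter.1 hω).2
      rw [hx]; ring
    rw [Finset.sum_congr rfl h1, Finset.sum_congr rfl h2, ← Finset.mul_sum,
      ← Finset.mul_sum, keyX x]
    ring
  have rhs_eq : ∑ ω, p ω * ((if D ω then (1:ℝ) else 0) * pf (X ω) * w (Y ω) (X ω) * qf (X ω))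
      = ∑ ω, p ω * (pf (X ω) * qf (X ω) * r (X ω)) := by
    apply sum_congr_fiber (fun ω => (Y ω, X ω))
    intro b
    obtain ⟨y, x⟩ := b
    simp only [Prod.mk.injEq]
    have h1 : ∀ ω ∈ Finset.univ.filter (fun ω => Y ω = y ∧ X ω = x),
        p ω * ((if D ω then (1:ℝ) else 0) * pf (X ω) * w (Y ω) (X ω) * qf (X ω))
          = (pf x * qf x * w y x) * (p ω * (if D ω then (1:ℝ) else 0)) := by
      intro ω hω
      obtain ⟨hy, hx⟩ := (Finset.mem_filter.1 hω).2
      rw [hy, hx]; ring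
    have h2 : ∀ ω ∈ Finset.univ.filter (fun ω => Y ω = y ∧ X ω = x),
        p ω * (pf (X ω) * qf (X ω) * r (X ω)) = (pf x * qf x * r x) * p ω := by
      intro ω hω
      obtain ⟨hy, hx⟩ := (Finset.mem_filter.1 hω).2
      rw [hx]; ring
    rw [Finset.sum_congr rfl h1, Finset.sum_congr rfl h2, ← Finset.mul_sum, ← Finset.mul_sum]
    have := keyYX y x
    calc pf x * qf x * w y x * ∑ ω ∈ Finset.univ.filter (fun ω => Y ω = y ∧ X ω = x),
            p ω * (if D ω then (1:ℝ) else 0)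
        = pf x * qf x * (w y x * ∑ ω ∈ Finset.univ.filter (fun ω => Y ω = y ∧ X ω = x),
            p ω * (if D ω then (1:ℝ) else 0)) := by ring
      _ = pf x * qf x * (r x * ∑ ω ∈ Finset.univ.filter (fun ω => Y ω = y ∧ X ω = x), p ω) := by
            rw [this]
      _ = pf x * qf x * r x * ∑ ω ∈ Finset.univ.filter (fun ω => Y ω = y ∧ X ω = x), p ω := by
            ring
  rw [lhs_eq, rhs_eq]
end

section
/- Let Y*, X* be random variables on a finite probability space with binary indicators Δ^Y, Δ^X, and set Δ := Δ^Y·Δ^X. Assume P(Δ=1 | Y*=y, X*=x) > 0 for all (y,x) in the support. Then for every x with P(Δ^X=1, X*=x) > 0, E[Y* | X*=x] = E[ Δ^Y · Y* · P(Δ^X=1 | X*=x) / P(Δ=1 | Y*, X*=x) | Δ^X=1, X*=x ]. -/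
open scoped BigOperators
attribute [local instance] Classical.propDecidable

/-! Within the stratum `X* = x`, group units by their value `y` of `Y*`. The units with `Δ = 1`
and `Y* = y` carry mass `P(Δ = 1, Y* = y, X* = x)`; dividing each by
`P(Δ = 1 | Y* = y, X* = x)` rescales that mass to `P(Y* = y, X* = x)`, the mass of the whole
fibre (a double count over pairs of units in one fibre). Positivity of the observation
probability means no fibre of positive mass is lost. Averaging over `Δ^X = 1` rather than the
whole stratum costs the factor `P(Δ^X = 1 | X* = x)`, which the weight restores. -/

section FiniteProbability

variable {Ω γ : Type*} [Fintype Ω]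

theorem Pr_setOf_eq_inter (p : Ω → ℝ) (φ : Ω → γ) (y : γ) (S : Set Ω)
    [DecidablePred (· ∈ S)] :
    Pr p ({a | φ a = y} ∩ S) = ∑ ω, if φ ω = y then (if ω ∈ S then p ω else 0) else 0 := by
  refine Finset.sum_congr rfl fun ω _ => ?_
  by_cases hy : φ ω = y <;> by_cases hS : ω ∈ S <;> simp [hy, hS]

theorem sum_mul_fiberSum_comm (a b : Ω → ℝ) (φ : Ω → γ) (c : γ → ℝ) :
    ∑ ω, a ω * c (φ ω) * ∑ ω', (if φ ω' = φ ω then b ω' else 0)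
      = ∑ ω', b ω' * c (φ ω') * ∑ ω, (if φ ω = φ ω' then a ω else 0) := by
  simp only [Finset.mul_sum]
  rw [Finset.sum_comm]
  refine Finset.sum_congr rfl fun ω' _ => Finset.sum_congr rfl fun ω _ => ?_
  by_cases h : φ ω' = φ ω
  · rw [if_pos h, if_pos h.symm, h]
    ring
  · rw [if_neg h, if_neg (Ne.symm h), mul_zero, mul_zero]

theorem condE_mul_const (p f : Ω → ℝ) (c : ℝ) (B : Set Ω) :
    condE p (fun ω => f ω * c) B = condE p f B * c := by
  simp only [condE, div_mul_eq_mul_div, Finset.sum_mul]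
  congr 1
  refine Finset.sum_congr rfl fun ω _ => ?_
  split_ifs <;> ring

theorem condE_inter_mul_condPr (p g : Ω → ℝ) (A B : Set Ω) [DecidablePred (· ∈ A)]
    (hAB : Pr p (A ∩ B) ≠ 0) :
    condE p g (A ∩ B) * condPr p A B = condE p (fun ω => if ω ∈ A then g ω else 0) B := by
  rw [condE, condPr, div_mul_div_cancel₀ hAB, condE]
  congr 1
  refine Finset.sum_congr rfl fun ω _ => ?_
  by_cases hA : ω ∈ A <;> by_cases hB : ω ∈ B <;> simp [hA, hB]

theorem condE_ite_div_condPr_fiber (p : Ω → ℝ) (φ : Ω → γ) (h : γ → ℝ) (E B : Set Ω)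
    [DecidablePred (· ∈ E)]
    (hE : ∀ ω ∈ B, p ω ≠ 0 → condPr p E ({a | φ a = φ ω} ∩ B) ≠ 0) :
    condE p (fun ω => if ω ∈ E then h (φ ω) / condPr p E ({a | φ a = φ ω} ∩ B) else 0) B
      = condE p (fun ω => h (φ ω)) B := by
  set v : γ → ℝ := fun y => Pr p ({a | φ a = y} ∩ B)
  set w : γ → ℝ := fun y => Pr p ({a | φ a = y} ∩ (E ∩ B))
  have hcondPr : ∀ y, condPr p E ({a | φ a = y} ∩ B) = w y / v y := fun y => by
    rw [condPr, Set.inter_left_comm]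
  have hw : ∀ ω ∈ B, p ω ≠ 0 → w (φ ω) ≠ 0 := fun ω hω hp =>
    (div_ne_zero_iff.mp (hcondPr (φ ω) ▸ hE ω hω hp)).1
  unfold condE
  congr 1
  calc ∑ ω, (if ω ∈ B then
          p ω * (if ω ∈ E then h (φ ω) / condPr p E ({a | φ a = φ ω} ∩ B) else 0) else 0)
      = ∑ ω, (if ω ∈ E ∩ B then p ω else 0) * (h (φ ω) / w (φ ω)) * v (φ ω) := by
        refine Finset.sum_congr rfl fun ω _ => ?_
        rw [hcondPr]
        by_cases hB : ω ∈ B <;> by_cases hEω : ω ∈ E <;> simp [hB, hEω, div_div_eq_mul_div]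
        ring
    _ = ∑ ω, (if ω ∈ B then p ω else 0) * (h (φ ω) / w (φ ω)) * w (φ ω) := by
        simpa only [← Pr_setOf_eq_inter] using sum_mul_fiberSum_comm
          (fun ω => if ω ∈ E ∩ B then p ω else 0) (fun ω => if ω ∈ B then p ω else 0) φ
          (fun y => h y / w y)
    _ = ∑ ω, if ω ∈ B then p ω * h (φ ω) else 0 := by
        refine Finset.sum_congr rfl fun ω _ => ?_
        by_cases hB : ω ∈ B
        · by_cases hp : p ω = 0
          · simp [hB, hp]
          · rw [if_pos hB, if_pos hB, mul_assoc, div_mul_cancel₀ _ (hw ω hB hp)]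
        · simp [hB]

end FiniteProbability

theorem stmt12_general {Ω β : Type*} [Fintype Ω]
    (p : Ω → ℝ) (hp : ∀ ω, 0 ≤ p ω)
    (Ystar : Ω → ℝ) (X : Ω → β) (DY DX : Ω → Bool)
    (hpos : ∀ ω, 0 < p ω →
      0 < condPr p {ω' | DY ω' = true ∧ DX ω' = true}
            {ω' | Ystar ω' = Ystar ω ∧ X ω' = X ω}) :
    ∀ x, 0 < Pr p {ω' | DX ω' = true ∧ X ω' = x} →
      condE p Ystar {ω' | X ω' = x}
        = condE p (fun ω' => (if DY ω' then Ystar ω' else 0)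
            * condPr p {a | DX a = true} {a | X a = x}
            / condPr p {a | DY a = true ∧ DX a = true}
                {a | Ystar a = Ystar ω' ∧ X a = x})
          {ω' | DX ω' = true ∧ X ω' = x} := by
  intro x hobs
  set B : Set Ω := {a | X a = x}
  set E : Set Ω := {a | DY a = true ∧ DX a = true}
  set weight : Ω → ℝ := fun ω => condPr p E ({a | Ystar a = Ystar ω} ∩ B)
  have hweight : ∀ ω ∈ B, p ω ≠ 0 → weight ω ≠ 0 := fun ω (hω : X ω = x) hp0 => by
    have h := hpos ω ((hp ω).lt_of_ne' hp0)
    rw [hω] at h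
    exact h.ne'
  symm
  calc condE p
          (fun ω => (if DY ω then Ystar ω else 0) * condPr p {a | DX a = true} B / weight ω)
          ({a | DX a = true} ∩ B)
      = condE p (fun ω => (if DY ω then Ystar ω else 0) / weight ω) ({a | DX a = true} ∩ B)
          * condPr p {a | DX a = true} B := by
        rw [← condE_mul_const]
        congr 1
        funext ω
        ring
    _ = condE p (fun ω => if ω ∈ E then Ystar ω / weight ω else 0) B := by
        rw [condE_inter_mul_condPr p _ {a | DX a = true} B hobs.ne']
        congr 1
        funext ω
        by_cases hX : DX ω = true <;> by_cases hY : DY ω = true <;> simp [E, hX, hY]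
    _ = condE p Ystar B := condE_ite_div_condPr_fiber p Ystar id E B hweight

/-- jointly selectively missing outcome and covariate:
`E[Y*|X*=x] = E[Δ^Y·Y*·P(Δ^X=1|X*=x)/P(Δ=1|Y*,X*=x) | Δ^X=1, X*=x]`. -/
theorem stmt12 {Ω β : Type*} [Fintype Ω]
    (p : Ω → ℝ) (hp : ∀ ω, 0 ≤ p ω) (hsum : ∑ ω, p ω = 1)
    (Ystar : Ω → ℝ) (X : Ω → β) (DY DX : Ω → Bool)
    (hpos : ∀ ω, 0 < p ω →
      0 < condPr p {ω' | DY ω' = true ∧ DX ω' = true}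
            {ω' | Ystar ω' = Ystar ω ∧ X ω' = X ω}) :
    ∀ x, 0 < Pr p {ω' | DX ω' = true ∧ X ω' = x} →
      condE p Ystar {ω' | X ω' = x}
        = condE p (fun ω' => (if DY ω' then Ystar ω' else 0)
            * condPr p {a | DX a = true} {a | X a = x}
            / condPr p {a | DY a = true ∧ DX a = true}
                {a | Ystar a = Ystar ω' ∧ X a = x})
          {ω' | DX ω' = true ∧ X ω' = x} :=
  stmt12_general p hp Ystar X DY DX hpos
end

section
/- Let Y, X be random variables on a finite probability space and Δ binary with φ(y,x):=P(Δ=1|Y=y,X=x)>0 and ω(y,x):=P(Δ=1|X=x)/φ(y,x). Define g(x):=E[Y|X=x]. Then for every function p on the range of X, E[ Δ · g(X) · p(X) ] = E[ Δ · Y · ω(Y,X) · p(X) ]. -/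
open scoped BigOperators
attribute [local instance] Classical.propDecidable

/-- the moment identity for the FPW series estimator:
`E[Δ·g(X)·p(X)] = E[Δ·Y·ω(Y,X)·p(X)]` for every basis function `p`. -/
theorem stmt14 {Ω β : Type*} [Fintype Ω]
    (p : Ω → ℝ) (hp : ∀ ω, 0 ≤ p ω) (hsum : ∑ ω, p ω = 1)
    (Y : Ω → ℝ) (X : Ω → β) (D : Ω → Bool)
    (φ : ℝ → β → ℝ)
    (hφdef : ∀ y x, φ y x =
      condPr p {ω' | D ω' = true} {ω' | Y ω' = y ∧ X ω' = x})
    (hφpos : ∀ ω, 0 < p ω → 0 < φ (Y ω) (X ω))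
    (w : ℝ → β → ℝ)
    (hwdef : ∀ y x, w y x = condPr p {ω' | D ω' = true} {ω' | X ω' = x} / φ y x)
    (g : β → ℝ) (hgdef : ∀ x, g x = condE p Y {ω' | X ω' = x}) :
    ∀ pf : β → ℝ,
      Ex p (fun ω => (if D ω then (1:ℝ) else 0) * g (X ω) * pf (X ω))
        = Ex p (fun ω => (if D ω then (1:ℝ) else 0) * Y ω
            * w (Y ω) (X ω) * pf (X ω)) := by
  intro pf
  classical
  -- abbreviation for the conditional prob of D given X = x
  set q : β → ℝ := fun x =>
    Pr p ({ω' | D ω' = true} ∩ {ω' | X ω' = x}) / Pr p {ω' | X ω' = x} with hq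
  have hqdef : ∀ x, condPr p {ω' | D ω' = true} {ω' | X ω' = x} = q x := fun x => rfl
  -- LHS computation
  have hL : Ex p (fun ω => (if D ω then (1:ℝ) else 0) * g (X ω) * pf (X ω))
      = ∑ ω', p ω' * Y ω' * q (X ω') * pf (X ω') := by
    have expand : ∀ ω : Ω,
        p ω * ((if D ω then (1:ℝ) else 0) * g (X ω) * pf (X ω))
        = ∑ ω', (if X ω' = X ω then p ω' * Y ω' else 0)
            * ((if D ω then (1:ℝ) else 0) * p ω * pf (X ω)
                / Pr p {ω'' | X ω'' = X ω}) := by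
      intro ω
      rw [hgdef, condE, ← Finset.sum_mul]
      simp only [Set.mem_setOf_eq]
      ring
    calc Ex p (fun ω => (if D ω then (1:ℝ) else 0) * g (X ω) * pf (X ω))
        = ∑ ω, ∑ ω', (if X ω' = X ω then p ω' * Y ω' else 0)
            * ((if D ω then (1:ℝ) else 0) * p ω * pf (X ω)
                / Pr p {ω'' | X ω'' = X ω}) :=
          Finset.sum_congr rfl (fun ω _ => expand ω)
      _ = ∑ ω', ∑ ω, (if X ω' = X ω then p ω' * Y ω' else 0)
            * ((if D ω then (1:ℝ) else 0) * p ω * pf (X ω)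
                / Pr p {ω'' | X ω'' = X ω}) := Finset.sum_comm
      _ = ∑ ω', p ω' * Y ω' * q (X ω') * pf (X ω') := by
          refine Finset.sum_congr rfl (fun ω' _ => ?_)
          have step : ∀ ω : Ω,
              (if X ω' = X ω then p ω' * Y ω' else 0)
                * ((if D ω then (1:ℝ) else 0) * p ω * pf (X ω)
                    / Pr p {ω'' | X ω'' = X ω})
              = (if D ω = true ∧ X ω = X ω' then p ω else 0)
                * (p ω' * Y ω' * pf (X ω') / Pr p {ω'' | X ω'' = X ω'}) := by
            intro ω
            by_cases hx : X ω' = X ω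
            · by_cases hd : D ω = true
              · have hc : D ω = true ∧ X ω = X ω' := ⟨hd, hx.symm⟩
                rw [if_pos hx, if_pos hd, if_pos hc, ← hx]
                ring
              · simp [hd]
            · have hc : ¬(D ω = true ∧ X ω = X ω') := fun h => hx h.2.symm
              rw [if_neg hx, if_neg hc]
              ring
          rw [Finset.sum_congr rfl (fun ω _ => step ω), ← Finset.sum_mul]
          have hPrDX : (∑ ω, if D ω = true ∧ X ω = X ω' then p ω else 0)
              = Pr p ({ω'' | D ω'' = true} ∩ {ω'' | X ω'' = X ω'}) := by
            simp [Pr, Set.mem_inter_iff, Set.mem_setOf_eq]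
          rw [hPrDX, hq]
          ring
  -- RHS computation
  have hR : Ex p (fun ω => (if D ω then (1:ℝ) else 0) * Y ω
          * w (Y ω) (X ω) * pf (X ω))
      = ∑ ω', p ω' * Y ω' * q (X ω') * pf (X ω') := by
    have hw' : ∀ ω : Ω, w (Y ω) (X ω)
        = q (X ω) * (Pr p {ω'' | Y ω'' = Y ω ∧ X ω'' = X ω}
            / Pr p ({ω'' | D ω'' = true} ∩ {ω'' | Y ω'' = Y ω ∧ X ω'' = X ω})) := by
      intro ω
      rw [hwdef, hφdef, hqdef, condPr, div_eq_mul_inv, inv_div]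
    have expand : ∀ ω : Ω,
        p ω * ((if D ω then (1:ℝ) else 0) * Y ω * w (Y ω) (X ω) * pf (X ω))
        = ∑ ω', (if Y ω' = Y ω ∧ X ω' = X ω then p ω' else 0)
            * ((if D ω then (1:ℝ) else 0) * p ω * Y ω * q (X ω) * pf (X ω)
                / Pr p ({ω'' | D ω'' = true} ∩ {ω'' | Y ω'' = Y ω ∧ X ω'' = X ω})) := by
      intro ω
      rw [hw', ← Finset.sum_mul]
      have : (∑ ω', if Y ω' = Y ω ∧ X ω' = X ω then p ω' else 0)
          = Pr p {ω'' | Y ω'' = Y ω ∧ X ω'' = X ω} := by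
        unfold Pr
        refine Finset.sum_congr rfl fun ω'' _ => ?_
        congr 1
      rw [this]
      ring
    calc Ex p (fun ω => (if D ω then (1:ℝ) else 0) * Y ω
            * w (Y ω) (X ω) * pf (X ω))
        = ∑ ω, ∑ ω', (if Y ω' = Y ω ∧ X ω' = X ω then p ω' else 0)
            * ((if D ω then (1:ℝ) else 0) * p ω * Y ω * q (X ω) * pf (X ω)
                / Pr p ({ω'' | D ω'' = true} ∩ {ω'' | Y ω'' = Y ω ∧ X ω'' = X ω})) :=
          Finset.sum_congr rfl (fun ω _ => expand ω)
      _ = ∑ ω', ∑ ω, (if Y ω' = Y ω ∧ X ω' = X ω then p ω' else 0)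
            * ((if D ω then (1:ℝ) else 0) * p ω * Y ω * q (X ω) * pf (X ω)
                / Pr p ({ω'' | D ω'' = true} ∩ {ω'' | Y ω'' = Y ω ∧ X ω'' = X ω})) :=
          Finset.sum_comm
      _ = ∑ ω', p ω' * Y ω' * q (X ω') * pf (X ω') := by
          refine Finset.sum_congr rfl (fun ω' _ => ?_)
          have step : ∀ ω : Ω,
              (if Y ω' = Y ω ∧ X ω' = X ω then p ω' else 0)
                * ((if D ω then (1:ℝ) else 0) * p ω * Y ω * q (X ω) * pf (X ω)
                    / Pr p ({ω'' | D ω'' = true} ∩ {ω'' | Y ω'' = Y ω ∧ X ω'' = X ω}))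
              = (if D ω = true ∧ (Y ω = Y ω' ∧ X ω = X ω') then p ω else 0)
                * (p ω' * Y ω' * q (X ω') * pf (X ω')
                    / Pr p ({ω'' | D ω'' = true} ∩ {ω'' | Y ω'' = Y ω' ∧ X ω'' = X ω'})) := by
            intro ω
            by_cases hyx : Y ω' = Y ω ∧ X ω' = X ω
            · obtain ⟨hy, hx⟩ := hyx
              by_cases hd : D ω = true
              · have hc : D ω = true ∧ (Y ω = Y ω' ∧ X ω = X ω') :=
                  ⟨hd, hy.symm, hx.symm⟩
                rw [if_pos ⟨hy, hx⟩, if_pos hd, if_pos hc, ← hy, ← hx]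
                ring
              · simp [hd]
            · have hc : ¬(D ω = true ∧ (Y ω = Y ω' ∧ X ω = X ω')) :=
                fun h => hyx ⟨h.2.1.symm, h.2.2.symm⟩
              rw [if_neg hyx, if_neg hc]
              ring
          rw [Finset.sum_congr rfl (fun ω _ => step ω), ← Finset.sum_mul]
          have hPrDF : (∑ ω, if D ω = true ∧ (Y ω = Y ω' ∧ X ω = X ω') then p ω else 0)
              = Pr p ({ω'' | D ω'' = true} ∩ {ω'' | Y ω'' = Y ω' ∧ X ω'' = X ω'}) := by
            simp [Pr, Set.mem_inter_iff, Set.mem_setOf_eq]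
          rw [hPrDF]
          rcases eq_or_lt_of_le (hp ω') with h0 | h0
          · rw [← h0]; ring
          · have hφ := hφpos ω' h0
            rw [hφdef, condPr] at hφ
            have hden : Pr p ({ω'' | D ω'' = true}
                ∩ {ω'' | Y ω'' = Y ω' ∧ X ω'' = X ω'}) ≠ 0 := by
              intro hz
              rw [hz, zero_div] at hφ
              exact lt_irrefl 0 hφ
            field_simp
  rw [hL, hR]
end
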